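/- For every integer n ≥ 1 and every integer i with 1 ≤ i ≤ ⌊(n+1)/2⌋, the identity Σ_{w=1}^n K_w^{(n)}(i)·2^{n−w}·w·C(w−1, ⌈w/2⌉−1) = (−1)^i·Σ_{w=0}^{n−1} K_w^{(n−1)}(2i−2)·C(n−1,w) holds. -/

import Mathlib

/-!
Write `Λ(n, i)` for the left-hand side. Everything is read off the generating function
`Σ_k K_k^{(n)}(x) X^k = (1 - X)^x (1 + X)^{n - x}`. From
`K_k^{(n)}(x) + K_k^{(n)}(x + 1) = 2 K_k^{(n-1)}(x)` one gets
`Λ(n, i) + Λ(n, i + 1) = 4 Λ(n - 1, i)`. The right-hand side is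
`(-1)^i K_{n-1}^{(2n-2)}(2i - 2)` by a Vandermonde convolution, and
`K_{k+1}^{(n+2)}(x) - K_{k+1}^{(n+2)}(x + 2) = 4 K_k^{(n)}(x)` shows that it obeys the same
recurrence.
This leaves `i = 1`. There `K_w^{(n)}(1) = C(n-1, w) - C(n-1, w-1)`, and the weights
`c_w = w C(w-1, ⌈w/2⌉-1)` satisfy `c_{w+1} = 2 c_w + [w even] C(w, w/2)`, so summation by parts
turns `Λ(n, 1)` into `-Σ_v C(n-1, v) 2^{n-1-v} [v even] C(v, v/2)`. That is minus the coefficient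
of `X^{n-1}` in `((1 + X²) + 2X)^{n-1} = (1 + X)^{2n-2}`.
-/

/-- The Krawtchouk polynomial `K_k^{(n)}(x) = Σ_{i=0}^k (−1)^i·C(x,i)·C(n−x,k−i)`. -/
def kraw (n k x : ℕ) : ℤ :=
  ∑ i ∈ Finset.range (k + 1),
    (-1 : ℤ) ^ i * (Nat.choose x i : ℤ) * (Nat.choose (n - x) (k - i) : ℤ)

open Polynomial Finset

lemma coeff_one_sub_X_pow (x k : ℕ) :
    (((1 : ℤ[X]) - X) ^ x).coeff k = (-1 : ℤ) ^ k * x.choose k := by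
  have h : ((1 : ℤ[X]) - X) ^ x = ((1 + X) ^ x).comp (C (-1) * X) := by
    simp [sub_eq_add_neg]
  rw [h, comp_C_mul_X_coeff, coeff_one_add_X_pow, mul_comm]

lemma kraw_eq_coeff (n k x : ℕ) :
    kraw n k x = (((1 : ℤ[X]) - X) ^ x * (1 + X) ^ (n - x)).coeff k := by
  simp only [kraw, coeff_mul, Nat.sum_antidiagonal_eq_sum_range_succ_mk, coeff_one_sub_X_pow,
    coeff_one_add_X_pow]

lemma kraw_zero_right (n k : ℕ) : kraw n k 0 = n.choose k := by
  simp [kraw_eq_coeff, coeff_one_add_X_pow]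

lemma kraw_succ_succ_one (m k : ℕ) :
    kraw (m + 1) (k + 1) 1 = m.choose (k + 1) - m.choose k := by
  simp [kraw_eq_coeff, sub_mul, coeff_one_add_X_pow]

lemma kraw_eq_zero_of_lt {n k x : ℕ} (hx : x ≤ n) (hk : n < k) : kraw n k x = 0 := by
  rw [kraw_eq_coeff]
  refine coeff_eq_zero_of_natDegree_lt (natDegree_mul_le.trans_lt ?_)
  have h₁ : (((1 : ℤ[X]) - X) ^ x).natDegree ≤ x := by compute_degree!
  have h₂ : (((1 : ℤ[X]) + X) ^ (n - x)).natDegree ≤ n - x := by compute_degree!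
  omega

lemma kraw_succ_add_kraw_succ {m x : ℕ} (hx : x ≤ m) (k : ℕ) :
    kraw (m + 1) k x + kraw (m + 1) k (x + 1) = 2 * kraw m k x := by
  obtain ⟨d, rfl⟩ := Nat.exists_eq_add_of_le hx
  simp only [kraw_eq_coeff, ← coeff_add, ← coeff_ofNat_mul]
  rw [show x + d + 1 - x = d + 1 by omega, show x + d + 1 - (x + 1) = d by omega,
    show x + d - x = d by omega]
  ring_nf

lemma kraw_sub_kraw_add_two {n x : ℕ} (hx : x ≤ n) (k : ℕ) :
    kraw (n + 2) (k + 1) x - kraw (n + 2) (k + 1) (x + 2) = 4 * kraw n k x := by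
  obtain ⟨d, rfl⟩ := Nat.exists_eq_add_of_le hx
  simp only [kraw_eq_coeff, ← coeff_sub, ← coeff_ofNat_mul]
  rw [show x + d + 2 - x = d + 2 by omega, show x + d + 2 - (x + 2) = d by omega,
    show x + d - x = d by omega, ← coeff_X_mul (p := 4 * (((1 : ℤ[X]) - X) ^ x * (1 + X) ^ d))]
  ring_nf

lemma sum_kraw_mul_choose {m x : ℕ} (hx : x ≤ m) (l k : ℕ) :
    ∑ w ∈ range (k + 1), kraw m w x * l.choose (k - w) = kraw (m + l) k x := by
  rw [kraw_eq_coeff, show m + l - x = m - x + l by omega, pow_add, ← mul_assoc, coeff_mul,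
    Nat.sum_antidiagonal_eq_sum_range_succ_mk]
  simp only [kraw_eq_coeff, coeff_one_add_X_pow]

lemma coeff_one_add_X_sq_pow (v k : ℕ) :
    (((1 : ℤ[X]) + X ^ 2) ^ v).coeff k = if 2 ∣ k then (v.choose (k / 2) : ℤ) else 0 := by
  have h : ((1 : ℤ[X]) + X ^ 2) ^ v = expand ℤ 2 ((1 + X) ^ v) := by simp
  rw [h, coeff_expand two_pos, coeff_one_add_X_pow]

lemma sum_choose_mul_two_pow_mul_coeff_one_add_X_sq_pow (m : ℕ) :
    ∑ v ∈ range (m + 1), (m.choose v : ℤ) * (2 ^ (m - v) * (((1 : ℤ[X]) + X ^ 2) ^ v).coeff v)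
      = (2 * m).choose m := by
  have h : ((1 : ℤ[X]) + X) ^ (2 * m) = ((1 + X ^ 2) + C 2 * X) ^ m := by
    rw [pow_mul]; simp only [C_ofNat]; ring
  rw [← coeff_one_add_X_pow ℤ, h, add_pow, finsetSum_coeff]
  refine sum_congr rfl fun v hmem => ?_
  have hv : v ≤ m := Nat.lt_succ_iff.mp (mem_range.mp hmem)
  have hterm : ((1 : ℤ[X]) + X ^ 2) ^ v * (C 2 * X) ^ (m - v) * (m.choose v : ℤ[X])
      = C ((m.choose v : ℤ) * 2 ^ (m - v)) * ((1 + X ^ 2) ^ v * X ^ (m - v)) := by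
    simp only [map_mul, map_pow, map_natCast, C_ofNat]
    ring
  rw [hterm, coeff_C_mul, coeff_mul_X_pow', if_pos (Nat.sub_le m v), Nat.sub_sub_self hv]
  ring

-- `(w + 1) / 2` is `⌈w / 2⌉`.
def centralWeight (w : ℕ) : ℤ := w * (w - 1).choose ((w + 1) / 2 - 1)

lemma two_mul_mul_choose_two_mul_sub_one (t : ℕ) :
    2 * t * (2 * t - 1).choose (t - 1) = t * (2 * t).choose t := by
  rcases t with _ | t
  · simp
  · have := Nat.add_one_mul_choose_eq (2 * t + 1) t
    rw [show 2 * (t + 1) - 1 = 2 * t + 1 by omega, Nat.add_sub_cancel,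
      show 2 * (t + 1) = 2 * t + 1 + 1 by omega]
    linarith

lemma centralWeight_succ (v : ℕ) :
    centralWeight (v + 1) = 2 * centralWeight v + (((1 : ℤ[X]) + X ^ 2) ^ v).coeff v := by
  rw [coeff_one_add_X_sq_pow]
  obtain ⟨t, rfl | rfl⟩ := Nat.even_or_odd' v
  · have key : (2 * t * (2 * t - 1).choose (t - 1) : ℤ) = t * (2 * t).choose t := by
      exact_mod_cast two_mul_mul_choose_two_mul_sub_one t
    simp only [centralWeight, dvd_mul_right, if_true]
    rw [show (2 * t + 1 + 1) / 2 - 1 = t by omega, show (2 * t + 1) / 2 - 1 = t - 1 by omega,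
      Nat.add_sub_cancel, Nat.mul_div_cancel_left t two_pos]
    push_cast
    linear_combination -2 * key
  · have key : ((2 * t + 1) * (2 * t).choose t : ℤ) = (t + 1) * (2 * t + 1).choose t := by
      rw [← Nat.choose_symm_half]
      exact_mod_cast (Nat.add_one_mul_choose_eq (2 * t) t).trans (mul_comm _ _)
    have hodd : ¬ 2 ∣ 2 * t + 1 := by omega
    simp only [centralWeight, hodd, if_false]
    rw [show (2 * t + 1 + 1 + 1) / 2 - 1 = t by omega, show (2 * t + 1 + 1) / 2 - 1 = t by omega,
      Nat.add_sub_cancel, Nat.add_sub_cancel]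
    push_cast
    linear_combination -2 * key

def lambdaSum (n i : ℕ) : ℤ := ∑ w ∈ Icc 1 n, kraw n w i * (2 ^ (n - w) * centralWeight w)

lemma sum_choose_succ_mul_centralWeight_succ (m : ℕ) :
    ∑ v ∈ range (m + 1), (m.choose (v + 1) : ℤ) * (2 ^ (m - v) * centralWeight (v + 1))
      = ∑ v ∈ range (m + 1), (m.choose v : ℤ) * (2 ^ (m - v) * (2 * centralWeight v)) := by
  let f (v : ℕ) : ℤ := m.choose v * (2 ^ (m + 1 - v) * centralWeight v)
  -- both sides are `Σ_{v ≤ m + 1} f v` less a vanishing end term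
  have hshift := (sum_range_succ' f (m + 1)).symm.trans (sum_range_succ f (m + 1))
  have hc₀ : centralWeight 0 = 0 := by simp [centralWeight]
  simp only [f, hc₀, Nat.choose_succ_self, Nat.add_sub_add_right, Nat.cast_zero, zero_mul,
    mul_zero, add_zero] at hshift
  rw [hshift]
  refine sum_congr rfl fun v hv => ?_
  rw [show m + 1 - v = m - v + 1 by have := mem_range.mp hv; omega, pow_succ]
  ring

lemma lambdaSum_one (m : ℕ) : lambdaSum (m + 1) 1 = -(2 * m).choose m := by
  rw [lambdaSum, ← Ico_add_one_right_eq_Icc, sum_Ico_eq_sum_range, Nat.add_sub_cancel,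
    ← sum_choose_mul_two_pow_mul_coeff_one_add_X_sq_pow]
  have hterm (v : ℕ) : kraw (m + 1) (1 + v) 1 * (2 ^ (m + 1 - (1 + v)) * centralWeight (1 + v))
      = m.choose (v + 1) * (2 ^ (m - v) * centralWeight (v + 1))
        - m.choose v * (2 ^ (m - v) * (2 * centralWeight v))
        - m.choose v * (2 ^ (m - v) * (((1 : ℤ[X]) + X ^ 2) ^ v).coeff v) := by
    rw [add_comm 1 v, kraw_succ_succ_one, Nat.add_sub_add_right, centralWeight_succ]
    ring
  simp only [hterm, sum_sub_distrib, sum_choose_succ_mul_centralWeight_succ, sub_self, zero_sub]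

lemma lambdaSum_add_lambdaSum_succ {m i : ℕ} (hi : i ≤ m) :
    lambdaSum (m + 1) i + lambdaSum (m + 1) (i + 1) = 4 * lambdaSum m i := by
  rw [lambdaSum, lambdaSum, lambdaSum, ← sum_add_distrib, mul_sum]
  simp only [← add_mul, kraw_succ_add_kraw_succ hi]
  rw [sum_Icc_succ_top (by omega), kraw_eq_zero_of_lt hi (Nat.lt_succ_self m), mul_zero,
    zero_mul, add_zero]
  refine sum_congr rfl fun w hw => ?_
  rw [show m + 1 - w = m - w + 1 by have := (mem_Icc.mp hw).2; omega, pow_succ]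
  ring

lemma lambdaSum_succ_succ {m i : ℕ} (h : 2 * i ≤ m) :
    lambdaSum (m + 1) (i + 1) = (-1) ^ (i + 1) * kraw (2 * m) m (2 * i) := by
  induction i generalizing m with
  | zero => simp [lambdaSum_one, kraw_zero_right]
  | succ i ih =>
    obtain ⟨m, rfl⟩ : ∃ m', m = m' + 1 := ⟨m - 1, by omega⟩
    have hrec := lambdaSum_add_lambdaSum_succ (m := m + 1) (i := i + 1) (by omega)
    have hm := ih (m := m) (by omega)
    have hm₁ := ih (m := m + 1) (by omega)
    have hkraw := kraw_sub_kraw_add_two (n := 2 * m) (x := 2 * i) (by omega) m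
    rw [show 2 * (m + 1) = 2 * m + 2 by ring, show 2 * (i + 1) = 2 * i + 2 by ring] at *
    linear_combination hrec - hm₁ + 4 * hm - (-1 : ℤ) ^ (i + 1) * hkraw

/-- For `n ≥ 1` and `1 ≤ i ≤ ⌊(n+1)/2⌋`,
`Σ_{w=1}^n K_w^{(n)}(i)·2^{n−w}·w·C(w−1,⌈w/2⌉−1)
   = (−1)^i·Σ_{w=0}^{n−1} K_w^{(n−1)}(2i−2)·C(n−1,w)`. -/
theorem krawtchouk_lambda_identity (n i : ℕ) (hn : 1 ≤ n)
    (hi1 : 1 ≤ i) (hi2 : i ≤ (n + 1) / 2) :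
    ∑ w ∈ Finset.Icc 1 n,
        kraw n w i * (2 ^ (n - w) * w * Nat.choose (w - 1) ((w + 1) / 2 - 1) : ℤ)
      = (-1 : ℤ) ^ i *
        ∑ w ∈ Finset.range n, kraw (n - 1) w (2 * i - 2) * (Nat.choose (n - 1) w : ℤ) := by
  obtain ⟨m, rfl⟩ : ∃ m, n = m + 1 := ⟨n - 1, by omega⟩
  obtain ⟨j, rfl⟩ : ∃ j, i = j + 1 := ⟨i - 1, by omega⟩
  have hj : 2 * j ≤ m := by omega
  have hsum : ∑ w ∈ range (m + 1), kraw m w (2 * j) * (m.choose w : ℤ)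
      = kraw (2 * m) m (2 * j) := by
    rw [two_mul m, ← sum_kraw_mul_choose (by omega)]
    refine sum_congr rfl fun w hw => ?_
    rw [Nat.choose_symm (Nat.lt_succ_iff.mp (mem_range.mp hw))]
  simp only [Nat.add_sub_cancel, show 2 * (j + 1) - 2 = 2 * j by omega, hsum, mul_assoc]
  exact lambdaSum_succ_succ hj
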